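/- A hypercomplex structure on a real Lie algebra g is equivalent to the data of a pair (m, J) where m is a complex Lie subalgebra of g^ℂ with g^ℂ = m ⊕ σ(m), and J is a ℂ-linear endomorphism of g^ℂ satisfying J² = -Id, N_J = 0, σJ = Jσ, and J(m) = σ(m). -/

import Mathlib

open TensorProduct

/-- The Nijenhuis tensor of an endomorphism `J` of a Lie algebra:
`N_J(x,y) = [x,y] + J[Jx,y] + J[x,Jy] - [Jx,Jy]`. -/
def nijenhuis {R L : Type*} [CommRing R] [LieRing L] [Module R L]
    (J : L →ₗ[R] L) (x y : L) : L :=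
  ⁅x, y⁆ + J ⁅J x, y⁆ + J ⁅x, J y⁆ - ⁅J x, J y⁆

/-- The conjugation `σ` of the complexification `ℂ ⊗[ℝ] g` with respect to the
real form `g`. -/
noncomputable def conjugation (L : Type*) [AddCommGroup L] [Module ℝ L] :
    (ℂ ⊗[ℝ] L) →ₗ[ℝ] (ℂ ⊗[ℝ] L) :=
  TensorProduct.map Complex.conjAe.toLinearMap LinearMap.id

open Module.End

/-!
A complex structure `J₁` on `g` is the same as the splitting `g^ℂ = m ⊕ σ(m)` into the
`±i`-eigenspaces of its complexification, and for eigenvectors `Jx = a x`, `Jy = b y` one has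
`N_J(x, y) = (1 - ab)[x, y] + (a + b) J[x, y]`; so `J₁` is integrable exactly when `m` is a
subalgebra. A second complex structure anticommutes with `J₁` exactly when its complexification
`J` swaps the two eigenspaces, i.e. `J(m) = σ(m)`, and the endomorphisms of `g^ℂ` commuting
with `σ` are exactly the complexified ones. Integrability of `J₃ = J₁J₂` comes for free: on
`m` and `σ(m)` the operator `J₁J` acts as `∓i J`, and evaluating `N_{J₁J}` on pairs of
eigenvectors reduces it to `N_J = 0`.
-/

section Nijenhuis

variable {R L : Type*} [CommRing R] [LieRing L]

lemma nijenhuis_add_left [Module R L] (J : L →ₗ[R] L) (x x' y : L) :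
    nijenhuis J (x + x') y = nijenhuis J x y + nijenhuis J x' y := by
  simp only [nijenhuis, map_add, add_lie]
  abel

lemma nijenhuis_add_right [Module R L] (J : L →ₗ[R] L) (x y y' : L) :
    nijenhuis J x (y + y') = nijenhuis J x y + nijenhuis J x y' := by
  simp only [nijenhuis, map_add, lie_add]
  abel

lemma nijenhuis_eq_zero_of_sup_eq_top [Module R L] (J : L →ₗ[R] L) {p q : Submodule R L}
    (hpq : p ⊔ q = ⊤) (h : ∀ x ∈ (p : Set L) ∪ q, ∀ y ∈ (p : Set L) ∪ q, nijenhuis J x y = 0)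
    (x y : L) : nijenhuis J x y = 0 := by
  have hmem (z : L) : z ∈ p ⊔ q := hpq ▸ Submodule.mem_top
  obtain ⟨x₁, hx₁, x₂, hx₂, rfl⟩ := Submodule.mem_sup.mp (hmem x)
  obtain ⟨y₁, hy₁, y₂, hy₂, rfl⟩ := Submodule.mem_sup.mp (hmem y)
  simp only [nijenhuis_add_left, nijenhuis_add_right,
    h x₁ (.inl hx₁) y₁ (.inl hy₁), h x₁ (.inl hx₁) y₂ (.inr hy₂),
    h x₂ (.inr hx₂) y₁ (.inl hy₁), h x₂ (.inr hx₂) y₂ (.inr hy₂), add_zero]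

variable [LieAlgebra R L] (J : L →ₗ[R] L)

lemma nijenhuis_of_mem_eigenspace {a b : R} {x y : L} (hx : x ∈ eigenspace J a)
    (hy : y ∈ eigenspace J b) :
    nijenhuis J x y = (1 - a * b) • ⁅x, y⁆ + (a + b) • J ⁅x, y⁆ := by
  rw [mem_eigenspace_iff] at hx hy
  simp only [nijenhuis, hx, hy, smul_lie, lie_smul, map_smul, smul_smul]
  module

lemma nijenhuis_eq_zero_of_le_eigenspace {a : R} (ha : a * a = -1) {p q : LieSubalgebra R L}
    (hpq : p.toSubmodule ⊔ q.toSubmodule = ⊤) (hp : p.toSubmodule ≤ eigenspace J a)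
    (hq : q.toSubmodule ≤ eigenspace J (-a)) (x y : L) : nijenhuis J x y = 0 := by
  refine nijenhuis_eq_zero_of_sup_eq_top J hpq ?_ x y
  rintro x (hx | hx) y (hy | hy)
  · rw [nijenhuis_of_mem_eigenspace J (hp hx) (hp hy),
      mem_eigenspace_iff.mp (hp (p.lie_mem hx hy))]
    linear_combination (norm := module) ha • ⁅x, y⁆
  · rw [nijenhuis_of_mem_eigenspace J (hp hx) (hq hy)]
    linear_combination (norm := module) ha • ⁅x, y⁆
  · rw [nijenhuis_of_mem_eigenspace J (hq hx) (hp hy)]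
    linear_combination (norm := module) ha • ⁅x, y⁆
  · rw [nijenhuis_of_mem_eigenspace J (hq hx) (hq hy),
      mem_eigenspace_iff.mp (hq (q.lie_mem hx hy))]
    linear_combination (norm := module) ha • ⁅x, y⁆

lemma nijenhuis_baseChange_tmul {A : Type*} [CommRing A] [Algebra R A] (f : L →ₗ[R] L)
    (a b : A) (x y : L) :
    nijenhuis (f.baseChange A) (a ⊗ₜ x) (b ⊗ₜ y) = (a * b) ⊗ₜ nijenhuis f x y := by
  simp only [nijenhuis, LinearMap.baseChange_tmul, LieAlgebra.ExtendScalars.bracket_tmul,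
    tmul_add, tmul_sub]

end Nijenhuis

section Anticommuting

variable {R L : Type*} [CommRing R] [LieRing L] [LieAlgebra R L] {J K : L →ₗ[R] L} {a : R}
  {p q : LieSubalgebra R L}

lemma nijenhuis_comp_eq_zero_of_mem_same (ha : a * a = -1) (hp : p.toSubmodule ≤ eigenspace J a)
    (hq : q.toSubmodule ≤ eigenspace J (-a)) (hKp : Set.MapsTo K p q) {x y : L}
    (hK : nijenhuis K x y = 0) (hx : x ∈ p) (hy : y ∈ p) : nijenhuis (J ∘ₗ K) x y = 0 := by
  have hJKx : J (K x) = -a • K x := mem_eigenspace_iff.mp (hq (hKp hx))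
  have hJKy : J (K y) = -a • K y := mem_eigenspace_iff.mp (hq (hKp hy))
  have hJ₁ : J ⁅x, y⁆ = a • ⁅x, y⁆ := mem_eigenspace_iff.mp (hp (p.lie_mem hx hy))
  have hJ₂ : J ⁅K x, K y⁆ = -a • ⁅K x, K y⁆ :=
    mem_eigenspace_iff.mp (hq (q.lie_mem (hKp hx) (hKp hy)))
  have hK' : K ⁅K x, y⁆ + K ⁅x, K y⁆ = ⁅K x, K y⁆ - ⁅x, y⁆ := by
    rw [nijenhuis] at hK
    linear_combination (norm := module) hK
  have hJK : J (K ⁅K x, y⁆) + J (K ⁅x, K y⁆) = -a • ⁅K x, K y⁆ - a • ⁅x, y⁆ := by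
    rw [← map_add, hK', map_sub, hJ₁, hJ₂]
  simp only [nijenhuis, LinearMap.comp_apply, hJKx, hJKy, smul_lie, lie_smul, map_smul]
  linear_combination (norm := module) (-a) • hJK + ha • ⁅x, y⁆

lemma nijenhuis_comp_eq_zero_of_mem_left_right (ha : a * a = -1)
    (hp : p.toSubmodule ≤ eigenspace J a) (hq : q.toSubmodule ≤ eigenspace J (-a))
    (hKp : Set.MapsTo K p q) (hKq : Set.MapsTo K q p) {x y : L}
    (hK : nijenhuis K x y = 0) (hx : x ∈ p) (hy : y ∈ q) : nijenhuis (J ∘ₗ K) x y = 0 := by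
  have hJKx : J (K x) = -a • K x := mem_eigenspace_iff.mp (hq (hKp hx))
  have hJKy : J (K y) = a • K y := mem_eigenspace_iff.mp (hp (hKq hy))
  have hJ₁ : J (K ⁅K x, y⁆) = a • K ⁅K x, y⁆ :=
    mem_eigenspace_iff.mp (hp (hKq (q.lie_mem (hKp hx) hy)))
  have hJ₂ : J (K ⁅x, K y⁆) = -a • K ⁅x, K y⁆ :=
    mem_eigenspace_iff.mp (hq (hKp (p.lie_mem hx (hKq hy))))
  rw [nijenhuis] at hK
  simp only [nijenhuis, LinearMap.comp_apply, hJKx, hJKy, smul_lie, lie_smul, map_smul, hJ₁, hJ₂]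
  linear_combination (norm := module) hK + ha • (⁅K x, K y⁆ - K ⁅K x, y⁆ - K ⁅x, K y⁆)

lemma nijenhuis_comp_eq_zero (ha : a * a = -1) (hpq : p.toSubmodule ⊔ q.toSubmodule = ⊤)
    (hp : p.toSubmodule ≤ eigenspace J a) (hq : q.toSubmodule ≤ eigenspace J (-a))
    (hKp : Set.MapsTo K p q) (hKq : Set.MapsTo K q p) (hK : ∀ x y, nijenhuis K x y = 0)
    (x y : L) : nijenhuis (J ∘ₗ K) x y = 0 := by
  have ha' : -a * -a = -1 := by rwa [neg_mul_neg]
  have hp' : p.toSubmodule ≤ eigenspace J (-(-a)) := by rwa [neg_neg]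
  refine nijenhuis_eq_zero_of_sup_eq_top _ hpq ?_ x y
  rintro x (hx | hx) y (hy | hy)
  -- the last two cases are the first two with `(p, q, a)` replaced by `(q, p, -a)`
  · exact nijenhuis_comp_eq_zero_of_mem_same ha hp hq hKp (hK x y) hx hy
  · exact nijenhuis_comp_eq_zero_of_mem_left_right ha hp hq hKp hKq (hK x y) hx hy
  · exact nijenhuis_comp_eq_zero_of_mem_left_right ha' hq hp' hKq hKp (hK x y) hx hy
  · exact nijenhuis_comp_eq_zero_of_mem_same ha' hq hp' hKq (hK x y) hx hy

end Anticommuting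

section CharNeTwo

variable {K V : Type*} [Field K] [NeZero (2 : K)] {a : K}

lemma isCompl_eigenspace_neg [AddCommGroup V] [Module K V] {J : Module.End K V}
    (hJ : J ∘ₗ J = -LinearMap.id) (ha : a * a = -1) :
    IsCompl (eigenspace J a) (eigenspace J (-a)) := by
  have ha₀ : a ≠ 0 := by rintro rfl; simp at ha
  have hne : a ≠ -a := fun h =>
    ha₀ ((mul_eq_zero.mp (by linear_combination h : (2 : K) * a = 0)).resolve_left two_ne_zero)
  refine ⟨J.eigenspaces_iSupIndep.pairwiseDisjoint hne,
    codisjoint_iff.mpr (eq_top_iff.mpr fun v _ => ?_)⟩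
  have hJv : J (J v) = -v := LinearMap.congr_fun hJ v
  have h₁ : (2 : K)⁻¹ • (v - a • J v) ∈ eigenspace J a := by
    rw [mem_eigenspace_iff, map_smul, map_sub, map_smul, hJv]
    linear_combination (norm := module) (2 : K)⁻¹ • ha • J v
  have h₂ : (2 : K)⁻¹ • (v + a • J v) ∈ eigenspace J (-a) := by
    rw [mem_eigenspace_iff, map_smul, map_add, map_smul, hJv]
    linear_combination (norm := module) (2 : K)⁻¹ • ha • J v
  have hv : v = (2 : K)⁻¹ • (v - a • J v) + (2 : K)⁻¹ • (v + a • J v) := by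
    rw [← smul_add, sub_add_add_cancel, ← two_smul K, smul_smul, inv_mul_cancel₀ two_ne_zero,
      one_smul]
  exact hv ▸ Submodule.add_mem_sup h₁ h₂

variable {L : Type*} [LieRing L] [LieAlgebra K L] (J : L →ₗ[K] L)

lemma lie_mem_eigenspace_of_nijenhuis_eq_zero (ha : a * a = -1) {x y : L}
    (hN : nijenhuis J x y = 0) (hx : x ∈ eigenspace J a) (hy : y ∈ eigenspace J a) :
    ⁅x, y⁆ ∈ eigenspace J a := by
  rw [nijenhuis_of_mem_eigenspace J hx hy] at hN
  have h : (2 * a) • (J ⁅x, y⁆ - a • ⁅x, y⁆) = 0 := by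
    linear_combination (norm := module) hN - ha • ⁅x, y⁆
  have ha₀ : a ≠ 0 := by rintro rfl; simp at ha
  rw [mem_eigenspace_iff, ← sub_eq_zero]
  exact (smul_eq_zero.mp h).resolve_left (mul_ne_zero two_ne_zero ha₀)

def eigenLieSubalgebra (ha : a * a = -1) (hN : ∀ x y, nijenhuis J x y = 0) :
    LieSubalgebra K L :=
  { eigenspace J a with
    lie_mem' := fun hx hy => lie_mem_eigenspace_of_nijenhuis_eq_zero J ha (hN _ _) hx hy }

end CharNeTwo

section Eigenspaces

variable {R V : Type*} [CommRing R] [AddCommGroup V] [Module R V] {J K : Module.End R V} {a : R}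

lemma map_eigenspace_of_anticommute (hK : K ∘ₗ K = -LinearMap.id) (hJK : J ∘ₗ K = -(K ∘ₗ J)) :
    (eigenspace J a).map K = eigenspace J (-a) := by
  have hKJ (v : V) : J (K v) = -K (J v) := LinearMap.congr_fun hJK v
  have hKK (v : V) : K (K v) = -v := LinearMap.congr_fun hK v
  apply le_antisymm
  · rintro _ ⟨v, hv, rfl⟩
    rw [SetLike.mem_coe, mem_eigenspace_iff] at hv
    rw [mem_eigenspace_iff, hKJ, hv, map_smul, neg_smul]
  · intro v hv
    rw [mem_eigenspace_iff] at hv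
    refine ⟨-K v, ?_, ?_⟩
    · rw [SetLike.mem_coe, mem_eigenspace_iff, map_neg, hKJ, hv, map_smul, neg_neg, smul_neg,
        neg_smul]
    · rw [map_neg, hKK, neg_neg]

variable {p q : Submodule R V}

lemma comp_self_eq_neg_id_of_le_eigenspace (ha : a * a = -1) (hpq : Codisjoint p q)
    (hp : p ≤ eigenspace J a) (hq : q ≤ eigenspace J (-a)) : J ∘ₗ J = -LinearMap.id := by
  refine LinearMap.ext_on_codisjoint hpq (fun v hv => ?_) (fun v hv => ?_)
  · simp [mem_eigenspace_iff.mp (hp hv), smul_smul, ha]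
  · simp [mem_eigenspace_iff.mp (hq hv), smul_smul, ha]

lemma comp_eq_neg_comp_of_mapsTo (hpq : Codisjoint p q) (hp : p ≤ eigenspace J a)
    (hq : q ≤ eigenspace J (-a)) (hKp : Set.MapsTo K p q) (hKq : Set.MapsTo K q p) :
    J ∘ₗ K = -(K ∘ₗ J) := by
  refine LinearMap.ext_on_codisjoint hpq (fun v hv => ?_) (fun v hv => ?_)
  · simp [mem_eigenspace_iff.mp (hp hv), mem_eigenspace_iff.mp (hq (hKp hv))]
  · simp [mem_eigenspace_iff.mp (hq hv), mem_eigenspace_iff.mp (hp (hKq hv))]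

lemma le_eigenspace_ofIsCompl_left (h : IsCompl p q) (a : R) :
    p ≤ eigenspace (LinearMap.ofIsCompl h (a • p.subtype) (-a • q.subtype)) a := fun v hv =>
  mem_eigenspace_iff.mpr (LinearMap.ofIsCompl_apply_left h ⟨v, hv⟩)

lemma le_eigenspace_ofIsCompl_right (h : IsCompl p q) (a : R) :
    q ≤ eigenspace (LinearMap.ofIsCompl h (a • p.subtype) (-a • q.subtype)) (-a) := fun v hv =>
  mem_eigenspace_iff.mpr (LinearMap.ofIsCompl_apply_right h ⟨v, hv⟩)

lemma comp_comp_self_eq_neg_id (hJ : J ∘ₗ J = -LinearMap.id) (hK : K ∘ₗ K = -LinearMap.id)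
    (hKJ : K ∘ₗ J = -(J ∘ₗ K)) : (J ∘ₗ K) ∘ₗ (J ∘ₗ K) = -LinearMap.id := by
  simp only [← Module.End.mul_eq_comp, ← Module.End.one_eq_id] at *
  calc J * K * (J * K) = J * (K * J) * K := by noncomm_ring
    _ = -((J * J) * (K * K)) := by rw [hKJ]; noncomm_ring
    _ = -1 := by rw [hJ, hK]; noncomm_ring

end Eigenspaces

section Complexification

open ComplexConjugate

variable {L : Type*} [AddCommGroup L] [Module ℝ L]

@[simp]
lemma conjugation_tmul (a : ℂ) (x : L) : conjugation L (a ⊗ₜ x) = conj a ⊗ₜ x := rfl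

lemma conjugation_involutive : Function.Involutive (conjugation L) := fun v => by
  induction v using TensorProduct.induction_on with
  | zero => simp
  | tmul a x => simp
  | add u w hu hw => simp only [map_add, hu, hw]

lemma conjugation_smul (c : ℂ) (v : ℂ ⊗[ℝ] L) :
    conjugation L (c • v) = conj c • conjugation L v := by
  induction v using TensorProduct.induction_on with
  | zero => simp
  | tmul a x => simp [smul_tmul']
  | add u w hu hw => simp only [smul_add, map_add, hu, hw]

lemma conjugation_comp_baseChange (f : L →ₗ[ℝ] L) :
    conjugation L ∘ₗ (f.baseChange ℂ).restrictScalars ℝ =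
      (f.baseChange ℂ).restrictScalars ℝ ∘ₗ conjugation L :=
  TensorProduct.ext' fun _ _ => rfl

lemma conjugation_mem_eigenspace_baseChange_iff (f : L →ₗ[ℝ] L) (c : ℂ) (v : ℂ ⊗[ℝ] L) :
    conjugation L v ∈ eigenspace (f.baseChange ℂ) c ↔ v ∈ eigenspace (f.baseChange ℂ) (conj c) := by
  have hf : f.baseChange ℂ (conjugation L v) = conjugation L (f.baseChange ℂ v) :=
    (LinearMap.congr_fun (conjugation_comp_baseChange f) v).symm
  have hc : c • conjugation L v = conjugation L (conj c • v) := by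
    rw [conjugation_smul, Complex.conj_conj]
  rw [mem_eigenspace_iff, mem_eigenspace_iff, hf, hc, conjugation_involutive.injective.eq_iff]

lemma conjugation_comp_eq_of_le_eigenspace {p q : Submodule ℂ (ℂ ⊗[ℝ] L)}
    (hpq : Codisjoint p q) (hσp : Set.MapsTo (conjugation L) p q)
    (hσq : Set.MapsTo (conjugation L) q p) {J : Module.End ℂ (ℂ ⊗[ℝ] L)}
    (hp : p ≤ eigenspace J Complex.I) (hq : q ≤ eigenspace J (-Complex.I)) :
    conjugation L ∘ₗ J.restrictScalars ℝ = J.restrictScalars ℝ ∘ₗ conjugation L := by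
  refine LinearMap.ext_on_codisjoint ((Submodule.codisjoint_restrictScalars_iff ℝ).mpr hpq)
    (fun v hv => ?_) (fun v hv => ?_)
  · simp [mem_eigenspace_iff.mp (hp hv), mem_eigenspace_iff.mp (hq (hσp hv)), conjugation_smul]
  · simp [mem_eigenspace_iff.mp (hq hv), mem_eigenspace_iff.mp (hp (hσq hv)), conjugation_smul]

noncomputable def rePart (L : Type*) [AddCommGroup L] [Module ℝ L] : ℂ ⊗[ℝ] L →ₗ[ℝ] L :=
  TensorProduct.lid ℝ L ∘ₗ TensorProduct.map Complex.reLm LinearMap.id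

@[simp]
lemma rePart_tmul (a : ℂ) (x : L) : rePart L (a ⊗ₜ x) = a.re • x := by
  simp [rePart]

lemma one_tmul_rePart (v : ℂ ⊗[ℝ] L) :
    (1 : ℂ) ⊗ₜ rePart L v = (2 : ℝ)⁻¹ • (v + conjugation L v) := by
  induction v using TensorProduct.induction_on with
  | zero => simp
  | tmul a x =>
    rw [rePart_tmul, conjugation_tmul, ← add_tmul, Complex.add_conj, tmul_smul, smul_tmul',
      smul_tmul', Complex.real_smul, Complex.real_smul]
    congr 1
    push_cast
    ring
  | add u w hu hw => rw [map_add, tmul_add, hu, hw, map_add, ← smul_add, add_add_add_comm]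

lemma one_tmul_rePart_of_conjugation_eq {v : ℂ ⊗[ℝ] L} (hv : conjugation L v = v) :
    (1 : ℂ) ⊗ₜ rePart L v = v := by
  rw [one_tmul_rePart, hv, ← two_smul ℝ v, smul_smul, inv_mul_cancel₀ two_ne_zero, one_smul]

lemma baseChange_injective :
    Function.Injective (LinearMap.baseChange ℂ : (L →ₗ[ℝ] L) → ℂ ⊗[ℝ] L →ₗ[ℂ] ℂ ⊗[ℝ] L) :=
  fun f g h => LinearMap.ext fun x => by
    simpa using congr_arg (rePart L) (LinearMap.congr_fun h (1 ⊗ₜ x))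

lemma baseChange_comp_self_eq_neg_id_iff (f : L →ₗ[ℝ] L) :
    f.baseChange ℂ ∘ₗ f.baseChange ℂ = -LinearMap.id ↔ f ∘ₗ f = -LinearMap.id := by
  rw [← LinearMap.baseChange_comp, ← LinearMap.baseChange_id, ← LinearMap.baseChange_neg,
    baseChange_injective.eq_iff]

lemma exists_baseChange_eq_of_commute (F : ℂ ⊗[ℝ] L →ₗ[ℂ] ℂ ⊗[ℝ] L)
    (hF : conjugation L ∘ₗ F.restrictScalars ℝ = F.restrictScalars ℝ ∘ₗ conjugation L) :
    ∃ f : L →ₗ[ℝ] L, f.baseChange ℂ = F := by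
  refine ⟨rePart L ∘ₗ F.restrictScalars ℝ ∘ₗ TensorProduct.mk ℝ ℂ L 1,
    TensorProduct.AlgebraTensorModule.ext fun a x => ?_⟩
  have hfix : conjugation L (F (1 ⊗ₜ x)) = F (1 ⊗ₜ x) := by
    simpa using LinearMap.congr_fun hF (1 ⊗ₜ x)
  calc a ⊗ₜ rePart L (F (1 ⊗ₜ x)) = a • ((1 : ℂ) ⊗ₜ rePart L (F (1 ⊗ₜ x))) := by
        rw [smul_tmul', smul_eq_mul, mul_one]
    _ = F (a ⊗ₜ x) := by
        rw [one_tmul_rePart_of_conjugation_eq hfix, ← map_smul, smul_tmul', smul_eq_mul, mul_one]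

end Complexification

section ComplexLie

open ComplexConjugate

variable {L : Type*} [LieRing L] [LieAlgebra ℝ L]

lemma nijenhuis_baseChange_eq_zero_iff (f : L →ₗ[ℝ] L) :
    (∀ v w, nijenhuis (f.baseChange ℂ) v w = 0) ↔ ∀ x y, nijenhuis f x y = 0 := by
  refine ⟨fun h x y => ?_, fun h v w => ?_⟩
  · simpa [nijenhuis_baseChange_tmul] using congr_arg (rePart L) (h (1 ⊗ₜ x) (1 ⊗ₜ y))
  induction v using TensorProduct.induction_on with
  | zero => simp [nijenhuis]
  | add v v' hv hv' => rw [nijenhuis_add_left, hv, hv', add_zero]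
  | tmul a x =>
    induction w using TensorProduct.induction_on with
    | zero => simp [nijenhuis]
    | add w w' hw hw' => rw [nijenhuis_add_right, hw, hw', add_zero]
    | tmul b y => rw [nijenhuis_baseChange_tmul, h, tmul_zero]

lemma conjugation_lie (u v : ℂ ⊗[ℝ] L) :
    conjugation L ⁅u, v⁆ = ⁅conjugation L u, conjugation L v⁆ := by
  have h : ⇑(conjugation L) = LieAlgebra.ExtendScalars.map Complex.conjAe (LieHom.id : L →ₗ⁅ℝ⁆ L) :=
    congr_arg DFunLike.coe (TensorProduct.ext' fun _ _ => rfl :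
      conjugation L = (LieAlgebra.ExtendScalars.map Complex.conjAe LieHom.id).toLinearMap)
  rw [h, LieHom.map_lie]

def LieSubalgebra.conjugate (m : LieSubalgebra ℂ (ℂ ⊗[ℝ] L)) : LieSubalgebra ℂ (ℂ ⊗[ℝ] L) where
  carrier := conjugation L ⁻¹' m
  add_mem' hu hv := by simpa using m.add_mem hu hv
  zero_mem' := by simp
  smul_mem' c v hv := by simpa [conjugation_smul] using m.smul_mem (conj c) hv
  lie_mem' hu hv := by simpa [conjugation_lie] using m.lie_mem hu hv

lemma LieSubalgebra.mem_conjugate {m : LieSubalgebra ℂ (ℂ ⊗[ℝ] L)} {v : ℂ ⊗[ℝ] L} :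
    v ∈ m.conjugate ↔ conjugation L v ∈ m := Iff.rfl

lemma map_conjugation_restrictScalars (m : LieSubalgebra ℂ (ℂ ⊗[ℝ] L)) :
    (m.toSubmodule.restrictScalars ℝ).map (conjugation L) =
      m.conjugate.toSubmodule.restrictScalars ℝ := by
  ext v
  refine ⟨?_, fun hv => ⟨_, hv, conjugation_involutive v⟩⟩
  rintro ⟨w, hw, rfl⟩
  simpa [LieSubalgebra.mem_conjugate, conjugation_involutive w] using hw

lemma conjugate_eigenLieSubalgebra (f : L →ₗ[ℝ] L)
    (hN : ∀ v w, nijenhuis (f.baseChange ℂ) v w = 0) :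
    (eigenLieSubalgebra (f.baseChange ℂ) Complex.I_mul_I hN).conjugate.toSubmodule =
      eigenspace (f.baseChange ℂ) (-Complex.I) := by
  ext v
  rw [LieSubalgebra.mem_toSubmodule, LieSubalgebra.mem_conjugate]
  exact (conjugation_mem_eigenspace_baseChange_iff f _ v).trans (by rw [Complex.conj_I])

lemma isCompl_conjugate_eigenLieSubalgebra {J₁ : L →ₗ[ℝ] L} (h₁ : J₁ ∘ₗ J₁ = -LinearMap.id)
    (hN : ∀ v w, nijenhuis (J₁.baseChange ℂ) v w = 0) :
    IsCompl (eigenLieSubalgebra (J₁.baseChange ℂ) Complex.I_mul_I hN).toSubmodule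
      (eigenLieSubalgebra (J₁.baseChange ℂ) Complex.I_mul_I hN).conjugate.toSubmodule := by
  rw [conjugate_eigenLieSubalgebra]
  exact isCompl_eigenspace_neg ((baseChange_comp_self_eq_neg_id_iff J₁).mpr h₁) Complex.I_mul_I

lemma map_eigenLieSubalgebra_of_anticommute {J₁ J₂ : L →ₗ[ℝ] L}
    (h₂ : J₂ ∘ₗ J₂ = -LinearMap.id) (h₂₁ : J₂ ∘ₗ J₁ = -(J₁ ∘ₗ J₂))
    (hN : ∀ v w, nijenhuis (J₁.baseChange ℂ) v w = 0) :
    (eigenLieSubalgebra (J₁.baseChange ℂ) Complex.I_mul_I hN).toSubmodule.map (J₂.baseChange ℂ) =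
      (eigenLieSubalgebra (J₁.baseChange ℂ) Complex.I_mul_I hN).conjugate.toSubmodule := by
  rw [conjugate_eigenLieSubalgebra]
  refine map_eigenspace_of_anticommute ((baseChange_comp_self_eq_neg_id_iff J₂).mpr h₂) ?_
  rw [← LinearMap.baseChange_comp, ← LinearMap.baseChange_comp, h₂₁, LinearMap.baseChange_neg,
    neg_neg]

end ComplexLie

lemma exists_complexStructure_of_isCompl_conjugate {L : Type*} [LieRing L] [LieAlgebra ℝ L]
    {m : LieSubalgebra ℂ (ℂ ⊗[ℝ] L)}
    (hm : IsCompl m.toSubmodule m.conjugate.toSubmodule) {J : Module.End ℂ (ℂ ⊗[ℝ] L)}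
    (hJ : J ∘ₗ J = -LinearMap.id) (hJm : m.toSubmodule.map J = m.conjugate.toSubmodule)
    (hN : ∀ x y, nijenhuis J x y = 0) :
    ∃ J₁ : Module.End ℂ (ℂ ⊗[ℝ] L), J₁ ∘ₗ J₁ = -LinearMap.id ∧
      conjugation L ∘ₗ J₁.restrictScalars ℝ = J₁.restrictScalars ℝ ∘ₗ conjugation L ∧
      J₁ ∘ₗ J = -(J ∘ₗ J₁) ∧ (∀ x y, nijenhuis J₁ x y = 0) ∧
      ∀ x y, nijenhuis (J₁ ∘ₗ J) x y = 0 := by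
  have hp := le_eigenspace_ofIsCompl_left hm Complex.I
  have hq := le_eigenspace_ofIsCompl_right hm Complex.I
  have hJp : Set.MapsTo J m m.conjugate := fun v hv => by
    rw [SetLike.mem_coe, ← LieSubalgebra.mem_toSubmodule, ← hJm]
    exact Submodule.mem_map_of_mem hv
  have hJq : Set.MapsTo J m.conjugate m := fun v hv => by
    rw [SetLike.mem_coe, ← LieSubalgebra.mem_toSubmodule, ← hJm] at hv
    obtain ⟨w, hw, rfl⟩ := hv
    rw [SetLike.mem_coe, show J (J w) = -w from LinearMap.congr_fun hJ w]
    exact m.neg_mem hw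
  have hσp : Set.MapsTo (conjugation L) m m.conjugate := fun v hv => by
    rwa [SetLike.mem_coe, LieSubalgebra.mem_conjugate, conjugation_involutive v]
  exact ⟨_, comp_self_eq_neg_id_of_le_eigenspace Complex.I_mul_I hm.codisjoint hp hq,
    conjugation_comp_eq_of_le_eigenspace hm.codisjoint hσp (fun _ hv => hv) hp hq,
    comp_eq_neg_comp_of_mapsTo hm.codisjoint hp hq hJp hJq,
    nijenhuis_eq_zero_of_le_eigenspace _ Complex.I_mul_I hm.sup_eq_top hp hq,
    nijenhuis_comp_eq_zero Complex.I_mul_I hm.sup_eq_top hp hq hJp hJq hN⟩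

lemma exists_anticommuting_of_isCompl_conjugate {L : Type*} [LieRing L] [LieAlgebra ℝ L]
    {m : LieSubalgebra ℂ (ℂ ⊗[ℝ] L)}
    (hm : IsCompl m.toSubmodule m.conjugate.toSubmodule) {J : Module.End ℂ (ℂ ⊗[ℝ] L)}
    (hJ : J ∘ₗ J = -LinearMap.id) (hN : ∀ x y, nijenhuis J x y = 0)
    (hσJ : conjugation L ∘ₗ J.restrictScalars ℝ = J.restrictScalars ℝ ∘ₗ conjugation L)
    (hJm : m.toSubmodule.map J = m.conjugate.toSubmodule) :
    ∃ J₁ J₂ : L →ₗ[ℝ] L, J₁ ∘ₗ J₁ = -LinearMap.id ∧ J₂ ∘ₗ J₂ = -LinearMap.id ∧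
      J₂ ∘ₗ J₁ = -(J₁ ∘ₗ J₂) ∧ (∀ x y, nijenhuis J₁ x y = 0) ∧
      (∀ x y, nijenhuis J₂ x y = 0) ∧ ∀ x y, nijenhuis (J₁ ∘ₗ J₂) x y = 0 := by
  obtain ⟨J₁, h₁, hσ₁, hJ₁, hN₁, hN₃⟩ := exists_complexStructure_of_isCompl_conjugate hm hJ hJm hN
  obtain ⟨J₁, rfl⟩ := exists_baseChange_eq_of_commute J₁ hσ₁
  obtain ⟨J₂, rfl⟩ := exists_baseChange_eq_of_commute J hσJ
  rw [baseChange_comp_self_eq_neg_id_iff] at h₁ hJ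
  rw [← LinearMap.baseChange_comp, ← LinearMap.baseChange_comp, ← LinearMap.baseChange_neg,
    baseChange_injective.eq_iff] at hJ₁
  rw [← LinearMap.baseChange_comp, nijenhuis_baseChange_eq_zero_iff] at hN₃
  rw [nijenhuis_baseChange_eq_zero_iff] at hN₁ hN
  exact ⟨J₁, J₂, h₁, hJ, (neg_eq_iff_eq_neg.mpr hJ₁).symm, hN₁, hN, hN₃⟩

theorem stmt3_general (L : Type*) [LieRing L] [LieAlgebra ℝ L] :
    (∃ J1 J2 J3 : L →ₗ[ℝ] L,
        J1 ∘ₗ J1 = -LinearMap.id ∧ J2 ∘ₗ J2 = -LinearMap.id ∧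
        J3 ∘ₗ J3 = -LinearMap.id ∧
        J1 ∘ₗ J2 = J3 ∧ J2 ∘ₗ J1 = -J3 ∧
        (∀ x y : L, nijenhuis J1 x y = 0) ∧
        (∀ x y : L, nijenhuis J2 x y = 0) ∧
        (∀ x y : L, nijenhuis J3 x y = 0)) ↔
    (∃ (m : LieSubalgebra ℂ (ℂ ⊗[ℝ] L)) (J : (ℂ ⊗[ℝ] L) →ₗ[ℂ] (ℂ ⊗[ℝ] L)),
        (m.toSubmodule.restrictScalars ℝ) ⊓
          (m.toSubmodule.restrictScalars ℝ).map (conjugation L) = ⊥ ∧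
        (m.toSubmodule.restrictScalars ℝ) ⊔
          (m.toSubmodule.restrictScalars ℝ).map (conjugation L) = ⊤ ∧
        J ∘ₗ J = -LinearMap.id ∧
        (∀ x y : ℂ ⊗[ℝ] L, nijenhuis J x y = 0) ∧
        conjugation L ∘ₗ (J.restrictScalars ℝ) = (J.restrictScalars ℝ) ∘ₗ conjugation L ∧
        (m.toSubmodule.restrictScalars ℝ).map (J.restrictScalars ℝ) =
          (m.toSubmodule.restrictScalars ℝ).map (conjugation L)) := by
  -- `σ(m)` is the complex Lie subalgebra `m.conjugate`, so every condition on `m` is read over `ℂ`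
  simp only [map_conjugation_restrictScalars, ← Submodule.restrictScalars_inf,
    ← Submodule.restrictScalars_sup, Submodule.restrictScalars_eq_bot_iff,
    Submodule.restrictScalars_eq_top_iff, ← Submodule.restrictScalars_map,
    Submodule.restrictScalars_inj]
  constructor
  · rintro ⟨J₁, J₂, -, h₁, h₂, -, rfl, h₂₁, hN₁, hN₂, -⟩
    have hN₁' := (nijenhuis_baseChange_eq_zero_iff J₁).mpr hN₁
    have hc := isCompl_conjugate_eigenLieSubalgebra h₁ hN₁'
    exact ⟨_, J₂.baseChange ℂ, hc.inf_eq_bot, hc.sup_eq_top,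
      (baseChange_comp_self_eq_neg_id_iff J₂).mpr h₂, (nijenhuis_baseChange_eq_zero_iff J₂).mpr hN₂,
      conjugation_comp_baseChange J₂, map_eigenLieSubalgebra_of_anticommute h₂ h₂₁ hN₁'⟩
  · rintro ⟨m, J, hinf, hsup, hJ, hN, hσJ, hJm⟩
    obtain ⟨J₁, J₂, h₁, h₂, h₂₁, hN₁, hN₂, hN₃⟩ := exists_anticommuting_of_isCompl_conjugate
      ⟨disjoint_iff.mpr hinf, codisjoint_iff.mpr hsup⟩ hJ hN hσJ hJm
    exact ⟨J₁, J₂, J₁ ∘ₗ J₂, h₁, h₂, comp_comp_self_eq_neg_id h₁ h₂ h₂₁, rfl, h₂₁, hN₁, hN₂, hN₃⟩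

/-- A hypercomplex structure on a real Lie algebra `g` (a triple of
integrable complex structures `J₁, J₂, J₃` with `J₁J₂ = -J₂J₁ = J₃`) is equivalent to the
data of a pair `(m, J)` where `m` is a complex Lie subalgebra of `g^ℂ` with
`g^ℂ = m ⊕ σ(m)`, and `J` is a `ℂ`-linear endomorphism of `g^ℂ` satisfying `J² = -Id`,
`N_J = 0`, `σJ = Jσ`, and `J(m) = σ(m)`. -/
theorem stmt3 (L : Type*) [LieRing L] [LieAlgebra ℝ L] [FiniteDimensional ℝ L] :
    (∃ J1 J2 J3 : L →ₗ[ℝ] L,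
        J1 ∘ₗ J1 = -LinearMap.id ∧ J2 ∘ₗ J2 = -LinearMap.id ∧
        J3 ∘ₗ J3 = -LinearMap.id ∧
        J1 ∘ₗ J2 = J3 ∧ J2 ∘ₗ J1 = -J3 ∧
        (∀ x y : L, nijenhuis J1 x y = 0) ∧
        (∀ x y : L, nijenhuis J2 x y = 0) ∧
        (∀ x y : L, nijenhuis J3 x y = 0)) ↔
    (∃ (m : LieSubalgebra ℂ (ℂ ⊗[ℝ] L)) (J : (ℂ ⊗[ℝ] L) →ₗ[ℂ] (ℂ ⊗[ℝ] L)),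
        (m.toSubmodule.restrictScalars ℝ) ⊓
          (m.toSubmodule.restrictScalars ℝ).map (conjugation L) = ⊥ ∧
        (m.toSubmodule.restrictScalars ℝ) ⊔
          (m.toSubmodule.restrictScalars ℝ).map (conjugation L) = ⊤ ∧
        J ∘ₗ J = -LinearMap.id ∧
        (∀ x y : ℂ ⊗[ℝ] L, nijenhuis J x y = 0) ∧
        conjugation L ∘ₗ (J.restrictScalars ℝ) = (J.restrictScalars ℝ) ∘ₗ conjugation L ∧
        (m.toSubmodule.restrictScalars ℝ).map (J.restrictScalars ℝ) =
          (m.toSubmodule.restrictScalars ℝ).map (conjugation L)) :=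
  stmt3_general L
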